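/- (Type II multiple discrete orthogonality) Assume B_{N+1} has N+1 simple real zeros λ_1 > ⋯ > λ_{N+1}. Then for every k ≥ 0 and j ∈ {0,…,p−1} with kp+j ≤ N: Σ_{i=1}^{N+1} μ_{i,r}·λ_i^m·B_{kp+j}(λ_i) = 0 for all m ∈ {0,…,k} and r ∈ {1,…,j}, and Σ_{i=1}^{N+1} μ_{i,r}·λ_i^m·B_{kp+j}(λ_i) = 0 for all m ∈ {0,…,k−1} and r ∈ {j+1,…,p}. -/

import Mathlib

/-!
At a point `x`, the values `B_n(x)` form a right eigenvector and the values `A^{(a)}_n(x)` left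
eigenvectors of the banded Hessenberg matrix `T`; by Laplace expansion along the first row, so do
the values `Q_{n,N}(x)`. Summation by parts gives a Christoffel–Darboux identity for the pairing
of such eigenvectors truncated at `N`, whose boundary terms only involve `b_{N+1}` and
`q_{N+1}, …, q_{N+p}`. At a zero `λ` of `B_{N+1}` the values `Q_{N+t,N}(λ)`, `1 ≤ t ≤ p`, vanish:
for `t < p` the determinant has a repeated row, and for `t = p` the identity with `x = y`
exhibits a nonzero left null vector of its matrix (nonzero because `T_{n,n-p} ≠ 0` and
`B_0 = 1`). Hence `(Q_{l,N}(λ_i))_l` and `(B_l(λ_{i'}))_l` are orthogonal for `i ≠ i'`, and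
inverting this square system gives `∑_i B_n(λ_i) Q_{l,N}(λ_i) / D_i = δ_{nl}`, where `D_i` is
the denominator of `w_{i,·}`. Finally `μ_{i,r} λ_i^m` is the value at `λ_i` of
`x^m ∑_b (ν⁻¹)_{rb} Q_{b,N}`, divided by `D_i`; since `ν⁻¹` is lower triangular and
multiplication by `x` raises the index by at most `p`, this polynomial lies in the span of the
`Q_{l,N}` with `l < r + 1 + mp ≤ kp + j`.
-/

open Polynomial

noncomputable def Qp (p : ℕ) (A : Fin p → ℕ → Polynomial ℝ) (n N : ℕ) : Polynomial ℝ :=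
  Matrix.det (Matrix.of fun i a : Fin p =>
    if (i : ℕ) = 0 then A a n else A a (N + (i : ℕ)))

noncomputable def nuMat (p : ℕ) (A : Fin p → ℕ → Polynomial ℝ) : Matrix (Fin p) (Fin p) ℝ :=
  Matrix.of fun j a : Fin p => (A a (j : ℕ)).coeff 0

noncomputable def wfun (p : ℕ) (A : Fin p → ℕ → Polynomial ℝ) (B : ℕ → Polynomial ℝ)
    (N : ℕ) (lam : Fin (N + 1) → ℝ) (k : Fin (N + 1)) (n : ℕ) : ℝ :=
  Polynomial.eval (lam k) (Qp p A n N) /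
    ∑ l ∈ Finset.range (N + 1),
      Polynomial.eval (lam k) (Qp p A l N) * Polynomial.eval (lam k) (B l)

noncomputable def mu (p : ℕ) (A : Fin p → ℕ → Polynomial ℝ) (B : ℕ → Polynomial ℝ)
    (N : ℕ) (lam : Fin (N + 1) → ℝ) (k : Fin (N + 1)) (a : Fin p) : ℝ :=
  ∑ b : Fin p, (nuMat p A)⁻¹ a b * wfun p A B N lam k (b : ℕ)

open Finset Matrix

lemma sum_Icc_ite_eq_sum_range {M : Type*} [AddCommMonoid M] {p n : ℕ} {f : ℕ → M}
    (hf : ∀ m, m + p < n → f m = 0) :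
    ∑ j ∈ Icc 1 p, (if j ≤ n then f (n - j) else 0) = ∑ m ∈ range n, f m := by
  rw [← sum_filter, ← sum_filter_of_ne (s := range n) (p := fun m => n ≤ m + p)
    fun m _ hm => by by_contra h; exact hm (hf m (by omega))]
  exact sum_nbij' (n - ·) (n - ·) (by simp; omega) (by simp; omega) (by simp; omega)
    (by simp; omega) (fun _ _ => rfl)

lemma sum_fin_window_eq_sum_Ico {M : Type*} [AddCommMonoid M] {p : ℕ} (hp : 0 < p) (N : ℕ)
    (f : ℕ → M) :
    ∑ i : Fin p, f (if (i : ℕ) = 0 then N + p else N + i)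
      = ∑ l ∈ Ico (N + 1) (N + p + 1), f l := by
  rw [Fin.sum_univ_eq_sum_range (fun i => f (if i = 0 then N + p else N + i)),
    sum_range_eq_add_Ico _ hp, if_pos rfl, sum_Ico_succ_top (by omega), add_comm,
    sum_congr rfl fun i hi => by rw [if_neg (by simp at hi; omega), add_comm],
    sum_Ico_add' f, add_comm 1 N, add_comm p N]

section Recurrences

variable {R : Type*} [CommRing R]

/-- `TypeIRec p T x q` and `TypeIIRec T y b` say that `q` is a left and `b` a right eigenvector,
for the eigenvalues `x` and `y`, of the lower Hessenberg matrix with entries `T n m` on and below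
the diagonal and `1` on the superdiagonal. `TypeIRec` only involves the entries `T (n + i) n`
with `i ≤ p`, and reads `q (-1)` as `0`. -/
def TypeIRec (p : ℕ) (T : ℕ → ℕ → R) (x : R) (q : ℕ → R) : Prop :=
  ∀ n, (if n = 0 then 0 else q (n - 1)) + ∑ i ∈ range (p + 1), T (n + i) n * q (n + i) = x * q n

def TypeIIRec (T : ℕ → ℕ → R) (y : R) (b : ℕ → R) : Prop :=
  ∀ n, b (n + 1) + ∑ m ∈ range (n + 1), T n m * b m = y * b n

variable {p N : ℕ} {T : ℕ → ℕ → R}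

lemma sum_range_shift_eq_sum_Ico (hT : ∀ n m, m + p < n → T n m = 0) (q : ℕ → R) {n : ℕ}
    (hn : n ≤ N) :
    ∑ i ∈ range (p + 1), T (n + i) n * q (n + i) = ∑ l ∈ Ico n (N + p + 1), T l n * q l := by
  rw [← sum_Ico_consecutive _ (by omega : n ≤ n + p + 1) (by omega : n + p + 1 ≤ N + p + 1),
    sum_eq_zero (s := Ico (n + p + 1) _) fun l hl => by
      rw [hT l n (by simp at hl; omega), zero_mul],
    add_zero, sum_Ico_eq_sum_range, show n + p + 1 - n = p + 1 by omega]

theorem christoffel_darboux (hT : ∀ n m, m + p < n → T n m = 0) {x y : R} {q b : ℕ → R}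
    (hq : TypeIRec p T x q) (hb : TypeIIRec T y b) (N : ℕ) :
    (y - x) * ∑ l ∈ range (N + 1), q l * b l
      = q N * b (N + 1)
        - ∑ l ∈ Ico (N + 1) (N + p + 1), q l * ∑ n ∈ range (N + 1), T l n * b n := by
  have hyb : y * ∑ l ∈ range (N + 1), q l * b l = ∑ l ∈ range (N + 1), q l * b (l + 1)
      + ∑ l ∈ range (N + 1), ∑ n ∈ range (l + 1), q l * T l n * b n := by
    rw [mul_sum, ← sum_add_distrib]
    refine sum_congr rfl fun l _ => ?_
    rw [mul_left_comm, ← hb l, mul_add, mul_sum]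
    simp only [mul_assoc]
  have hxq : x * ∑ n ∈ range (N + 1), q n * b n
      = ∑ n ∈ range (N + 1), (if n = 0 then 0 else q (n - 1)) * b n
        + ∑ n ∈ range (N + 1), ∑ l ∈ Ico n (N + p + 1), q l * T l n * b n := by
    rw [mul_sum, ← sum_add_distrib]
    refine sum_congr rfl fun n hn => ?_
    rw [← mul_assoc, ← hq, sum_range_shift_eq_sum_Ico hT q (mem_range_succ_iff.1 hn), add_mul,
      sum_mul]
    simp only [mul_comm (T _ n)]
  have hsplit : ∑ n ∈ range (N + 1), ∑ l ∈ Ico n (N + p + 1), q l * T l n * b n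
      = ∑ l ∈ range (N + 1), ∑ n ∈ range (l + 1), q l * T l n * b n
        + ∑ l ∈ Ico (N + 1) (N + p + 1), q l * ∑ n ∈ range (N + 1), T l n * b n := by
    have hswap : ∑ n ∈ range (N + 1), ∑ l ∈ Ico n (N + 1), q l * T l n * b n
        = ∑ l ∈ range (N + 1), ∑ n ∈ range (l + 1), q l * T l n * b n :=
      sum_comm' fun n l => by simp only [mem_range, mem_Ico]; omega
    simp only [mul_sum, ← mul_assoc]
    rw [← hswap, sum_comm (s := Ico (N + 1) _), ← sum_add_distrib]
    refine sum_congr rfl fun n hn => ?_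
    rw [sum_Ico_consecutive _ (mem_range.1 hn).le (by omega : N + 1 ≤ N + p + 1)]
  have htele : ∑ n ∈ range (N + 1), (if n = 0 then 0 else q (n - 1)) * b n
      = ∑ l ∈ range N, q l * b (l + 1) := by
    simp [sum_range_succ']
  rw [sum_range_succ (fun l => q l * b (l + 1))] at hyb
  linear_combination hyb - hxq - hsplit - htele

lemma sum_Ico_mul_eq_zero (hT : ∀ n m, m + p < n → T n m = 0) {x : R} {q b : ℕ → R}
    (hq : TypeIRec p T x q) (hb : TypeIIRec T x b) (hbN : b (N + 1) = 0) :
    ∑ l ∈ Ico (N + 1) (N + p + 1), q l * ∑ n ∈ range (N + 1), T l n * b n = 0 := by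
  simpa [hbN] using christoffel_darboux hT hq hb N

lemma TypeIRec.sum_mul {ι : Type*} (s : Finset ι) {x : R} {f : ι → ℕ → R}
    (hf : ∀ a ∈ s, TypeIRec p T x (f a)) (c : ι → R) :
    TypeIRec p T x (fun n => ∑ a ∈ s, c a * f a n) := by
  intro n
  calc _ = ∑ a ∈ s, c a * ((if n = 0 then 0 else f a (n - 1))
        + ∑ i ∈ range (p + 1), T (n + i) n * f a (n + i)) := by
        simp only [mul_add, sum_add_distrib, mul_sum]
        rw [sum_comm (s := range _)]
        congr 1
        · split_ifs <;> simp
        · simp only [mul_left_comm]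
    _ = x * ∑ a ∈ s, c a * f a n := by
        rw [mul_sum]
        exact sum_congr rfl fun a ha => by rw [hf a ha n]; ring

lemma TypeIRec.eval {Q : ℕ → R[X]} (hQ : TypeIRec p (fun n m => C (T n m)) X Q) (x : R) :
    TypeIRec p T x (fun n => (Q n).eval x) := by
  intro n
  simpa [eval_finsetSum, apply_ite (Polynomial.eval x)] using
    congrArg (Polynomial.eval x) (hQ n)

lemma typeIIRec_eval (hT : ∀ n m, m + p < n → T n m = 0) {B : ℕ → R[X]}
    (hB : ∀ n, B (n + 1) = (X - C (T n n)) * B n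
      - ∑ j ∈ Icc 1 p, (if j ≤ n then C (T n (n - j)) * B (n - j) else 0)) (x : R) :
    TypeIIRec T x (fun n => (B n).eval x) := by
  intro n
  have h := congrArg (eval x) (hB n)
  simp only [eval_sub, eval_mul, eval_X, eval_C, eval_finsetSum, apply_ite (eval x),
    eval_zero] at h
  rw [sum_Icc_ite_eq_sum_range (f := fun m => T n m * (B m).eval x)
    fun m hm => by rw [hT n m hm, zero_mul]] at h
  dsimp only
  rw [sum_range_succ, h]
  ring

lemma TypeIRec.X_mul_mem_span {Q : ℕ → R[X]} (hQ : TypeIRec p (fun n m => C (T n m)) X Q)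
    {L : ℕ} {f : R[X]} (hf : f ∈ Submodule.span R (Q '' Set.Iio L)) :
    X * f ∈ Submodule.span R (Q '' Set.Iio (L + p)) := by
  induction hf using Submodule.span_induction with
  | mem g hg =>
    obtain ⟨l, hl, rfl⟩ := hg
    rw [Set.mem_Iio] at hl
    rw [← hQ l]
    refine add_mem ?_ (Submodule.sum_mem _ fun i hi => ?_)
    · split_ifs
      · exact zero_mem _
      · exact Submodule.subset_span ⟨l - 1, Set.mem_Iio.2 (by omega), rfl⟩
    · rw [← smul_eq_C_mul]
      exact Submodule.smul_mem _ _
        (Submodule.subset_span ⟨l + i, Set.mem_Iio.2 (by simp at hi; omega), rfl⟩)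
  | zero => simp
  | add f g _ _ hf hg => rw [mul_add]; exact add_mem hf hg
  | smul a f _ hf => rw [mul_smul_comm]; exact Submodule.smul_mem _ _ hf

lemma TypeIRec.X_pow_mul_mem_span {Q : ℕ → R[X]} (hQ : TypeIRec p (fun n m => C (T n m)) X Q)
    {L : ℕ} {f : R[X]} (hf : f ∈ Submodule.span R (Q '' Set.Iio L)) (m : ℕ) :
    X ^ m * f ∈ Submodule.span R (Q '' Set.Iio (L + m * p)) := by
  induction m with
  | zero => simpa using hf
  | succ m ih =>
    rw [pow_succ', mul_assoc, add_one_mul, ← add_assoc]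
    exact hQ.X_mul_mem_span ih

variable [IsDomain R]

lemma sum_mul_eq_zero_of_ne (hT : ∀ n m, m + p < n → T n m = 0) {x y : R}
    {q b : ℕ → R} (hq : TypeIRec p T x q) (hb : TypeIIRec T y b) (hxy : x ≠ y)
    (hbN : b (N + 1) = 0) (hqN : ∀ l ∈ Ico (N + 1) (N + p + 1), q l = 0) :
    ∑ l ∈ range (N + 1), q l * b l = 0 := by
  have h := christoffel_darboux hT hq hb N
  rw [hbN, mul_zero, sum_eq_zero (s := Ico _ _) fun l hl => by rw [hqN l hl, zero_mul],
    sub_zero] at h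
  exact (mul_eq_zero.1 h).resolve_left (sub_ne_zero.2 hxy.symm)

/-- Downward elimination: the entry `b k` is the only one not yet known to vanish in row `k + p`
of the eigen-equation (if `k + p ≤ N`) or in the sum `hs (k + p)` (otherwise), and its
coefficient there is `T (k + p) k ≠ 0`. -/
lemma eq_zero_of_sum_Ico_eq_zero (hp : 0 < p) (hT : ∀ n m, m + p < n → T n m = 0)
    (hTlow : ∀ n, p ≤ n → T n (n - p) ≠ 0) {y : R} {b : ℕ → R} (hb : TypeIIRec T y b)
    (hbN : b (N + 1) = 0)
    (hs : ∀ l ∈ Ico (N + 1) (N + p + 1), ∑ n ∈ range (N + 1), T l n * b n = 0)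
    {n : ℕ} (hn : n ≤ N + 1) : b n = 0 := by
  refine Nat.decreasingInduction (motive := fun k _ => ∀ m, k ≤ m → m ≤ N + 1 → b m = 0)
    (fun k hk ih m hkm hm => ?_) (fun m h1 h2 => le_antisymm h2 h1 ▸ hbN) hn n le_rfl hn
  obtain rfl | hlt := hkm.eq_or_lt
  · obtain ⟨K, hkK, hKN, hK⟩ :
        ∃ K, k < K ∧ K ≤ N + 1 ∧ ∑ l ∈ range K, T (k + p) l * b l = 0 := by
      by_cases hkp : k + p ≤ N
      · refine ⟨k + p + 1, by omega, by omega, ?_⟩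
        have h := hb (k + p)
        rwa [ih (k + p + 1) (by omega) (by omega), ih (k + p) (by omega) (by omega), mul_zero,
          zero_add] at h
      · exact ⟨N + 1, hk, le_rfl, hs _ (mem_Ico.2 ⟨by omega, by omega⟩)⟩
    rw [sum_eq_single_of_mem k (mem_range.2 hkK) fun l hl hlk => ?_] at hK
    · exact (mul_eq_zero.1 hK).resolve_left (by simpa using hTlow (k + p) (by omega))
    · rcases lt_or_gt_of_ne hlk with h | h
      · rw [hT _ _ (by omega), zero_mul]
      · rw [ih l h (by simp at hl; omega), mul_zero]
  · exact ih m hlt hm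

/-- The sums `∑ n ≤ N, T l n * b n`, `N < l ≤ N + p`, form a left null vector of this matrix by
`sum_Ico_mul_eq_zero`, and it is nonzero by `eq_zero_of_sum_Ico_eq_zero`. -/
lemma det_window_eq_zero (hp : 0 < p) (hT : ∀ n m, m + p < n → T n m = 0)
    (hTlow : ∀ n, p ≤ n → T n (n - p) ≠ 0) {x : R} {b : ℕ → R} (hb : TypeIIRec T x b)
    (hb0 : b 0 ≠ 0) (hbN : b (N + 1) = 0) {α : Fin p → ℕ → R}
    (hα : ∀ a, TypeIRec p T x (α a)) :
    (Matrix.of fun i a : Fin p => α a (if (i : ℕ) = 0 then N + p else N + i)).det = 0 := by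
  set s : ℕ → R := fun l => ∑ n ∈ range (N + 1), T l n * b n
  rw [← Matrix.exists_vecMul_eq_zero_iff]
  refine ⟨fun i => s (if (i : ℕ) = 0 then N + p else N + i), fun h => hb0 ?_, funext fun a => ?_⟩
  · refine eq_zero_of_sum_Ico_eq_zero hp hT hTlow hb hbN (fun l hl => ?_) (Nat.zero_le _)
    rw [mem_Ico] at hl
    by_cases hlp : l = N + p
    · simpa [hlp] using congrFun h ⟨0, hp⟩
    · simpa [show l - N ≠ 0 by omega, show N + (l - N) = l by omega]
        using congrFun h ⟨l - N, by omega⟩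
  · have h := sum_Ico_mul_eq_zero hT (hα a) hb hbN
    rw [← sum_fin_window_eq_sum_Ico hp N (fun l => α a l * s l)] at h
    simpa [Matrix.vecMul, dotProduct, mul_comm] using h

end Recurrences

lemma det_updateRow_eq_sum_mul_adjugate {n R : Type*} [Fintype n] [DecidableEq n] [CommRing R]
    (M : Matrix n n R) (i : n) (v : n → R) :
    (M.updateRow i v).det = ∑ j, v j * M.adjugate j i := by
  rw [det_eq_sum_mul_adjugate_row _ i]
  simp [adjugate_apply, updateRow_idem]

lemma sum_mul_div_eq_ite_of_sum_mul_eq_ite {ι K : Type*} [Fintype ι] [DecidableEq ι] [Field K]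
    {u v : ι → ι → K} {D : ι → K} (hD : ∀ i, D i ≠ 0)
    (h : ∀ i j, ∑ l, u i l * v j l = if i = j then D i else 0) (l l' : ι) :
    ∑ i, v i l * u i l' / D i = if l = l' then 1 else 0 := by
  have hUV : (of fun i l => u i l / D i : Matrix ι ι K) * of (fun l j => v j l) = 1 := by
    ext i j
    simp only [mul_apply, of_apply, div_mul_eq_mul_div, ← sum_div, h, one_apply]
    split_ifs <;> simp [hD]
  have hVU : (of fun l j => v j l : Matrix ι ι K) * of (fun i l => u i l / D i) = 1 :=
    mul_eq_one_comm.1 hUV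
  simpa [mul_apply, one_apply, mul_div_assoc] using congrFun₂ hVU l l'

lemma inv_apply_eq_zero_of_lt {p : ℕ} {K : Type*} [Field K] {M : Matrix (Fin p) (Fin p) K}
    (hM : ∀ i j, i < j → M i j = 0) {i j : Fin p} (hij : i < j) : M⁻¹ i j = 0 := by
  have htri : M.BlockTriangular OrderDual.toDual := fun i j hij =>
    hM i j (OrderDual.toDual_lt_toDual.mp hij)
  by_cases hdet : IsUnit M.det
  · have := invertibleOfIsUnitDet M hdet
    exact blockTriangular_inv_of_blockTriangular htri hij
  · simp [nonsing_inv_apply_not_isUnit M hdet]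

lemma sum_eval_mul_eq_zero_of_mem_span {ι K : Type*} [Fintype ι] [CommRing K] {x c : ι → K}
    {Q : ℕ → K[X]} {n : ℕ} (hQ : ∀ l < n, ∑ i, (Q l).eval (x i) * c i = 0) {f : K[X]}
    (hf : f ∈ Submodule.span K (Q '' Set.Iio n)) : ∑ i, f.eval (x i) * c i = 0 := by
  let φ : K[X] →ₗ[K] K := ∑ i, c i • leval (x i)
  have hφ : ∀ g, φ g = ∑ i, g.eval (x i) * c i := fun g => by simp [φ, mul_comm]
  rw [← hφ]
  refine (Submodule.span_le (p := LinearMap.ker φ)).2 ?_ hf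
  rintro _ ⟨l, hl, rfl⟩
  simpa [hφ] using hQ l hl

section Qp

variable {p : ℕ} {A : Fin p → ℕ → ℝ[X]} {T : ℕ → ℕ → ℝ}

lemma Qp_eq_det_updateRow (hp : 0 < p) (n N : ℕ) :
    Qp p A n N = ((of fun i a : Fin p => A a (N + i)).updateRow ⟨0, hp⟩ fun a => A a n).det := by
  unfold Qp
  congr 1
  ext i a
  by_cases h : (i : ℕ) = 0
  · simp [show i = ⟨0, hp⟩ from Fin.ext h]
  · simp [h, updateRow_ne (show i ≠ ⟨0, hp⟩ from fun e => h (by simp [e]))]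

lemma typeIRec_Qp (hp : 0 < p) (hA : ∀ a, TypeIRec p (fun n m => C (T n m)) X (A a)) (N : ℕ) :
    TypeIRec p (fun n m => C (T n m)) X (fun n => Qp p A n N) := by
  have hQ : (fun n => Qp p A n N)
      = fun n => ∑ a, (of fun i a : Fin p => A a (N + i)).adjugate a ⟨0, hp⟩ * A a n :=
    funext fun n => by
      rw [Qp_eq_det_updateRow hp, det_updateRow_eq_sum_mul_adjugate]
      simp [mul_comm]
  rw [hQ]
  exact TypeIRec.sum_mul univ (fun a _ => hA a) _

lemma Qp_add_eq_zero (N : ℕ) {t : ℕ} (ht : 1 ≤ t) (htp : t < p) :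
    Qp p A (N + t) N = 0 :=
  det_zero_of_row_eq (i := ⟨0, by omega⟩) (j := ⟨t, htp⟩) (by simp [Fin.ext_iff]; omega)
    (funext fun a => by simp [show t ≠ 0 by omega])

variable {N : ℕ} {B : ℕ → ℝ[X]}

lemma eval_Qp_eq_zero_of_mem_Ico (hp : 0 < p) (hT : ∀ n m, m + p < n → T n m = 0)
    (hTlow : ∀ n, p ≤ n → T n (n - p) ≠ 0) (hB0 : B 0 = 1)
    (hB : ∀ n, B (n + 1) = (X - C (T n n)) * B n
      - ∑ j ∈ Icc 1 p, (if j ≤ n then C (T n (n - j)) * B (n - j) else 0))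
    (hA : ∀ a, TypeIRec p (fun n m => C (T n m)) X (A a)) {x : ℝ} (hx : (B (N + 1)).eval x = 0)
    {l : ℕ} (hl : l ∈ Ico (N + 1) (N + p + 1)) : (Qp p A l N).eval x = 0 := by
  rw [mem_Ico] at hl
  obtain ⟨t, rfl⟩ : ∃ t, l = N + t := ⟨l - N, by omega⟩
  obtain ht | rfl : t < p ∨ t = p := by omega
  · rw [Qp_add_eq_zero N (by omega) ht, eval_zero]
  · rw [Qp, ← coe_evalRingHom, RingHom.map_det]
    convert det_window_eq_zero hp hT hTlow (typeIIRec_eval hT hB x) (by simp [hB0]) hx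
      fun a => (hA a).eval x using 2
    ext i a
    simp only [RingHom.mapMatrix_apply, map_apply, of_apply, coe_evalRingHom]
    split_ifs <;> rfl

lemma sum_eval_Qp_mul_eval_B_eq_zero (hp : 0 < p) (hT : ∀ n m, m + p < n → T n m = 0)
    (hTlow : ∀ n, p ≤ n → T n (n - p) ≠ 0) (hB0 : B 0 = 1)
    (hB : ∀ n, B (n + 1) = (X - C (T n n)) * B n
      - ∑ j ∈ Icc 1 p, (if j ≤ n then C (T n (n - j)) * B (n - j) else 0))
    (hA : ∀ a, TypeIRec p (fun n m => C (T n m)) X (A a)) {x y : ℝ}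
    (hx : (B (N + 1)).eval x = 0) (hy : (B (N + 1)).eval y = 0) (hxy : x ≠ y) :
    ∑ l ∈ range (N + 1), (Qp p A l N).eval x * (B l).eval y = 0 :=
  sum_mul_eq_zero_of_ne hT ((typeIRec_Qp hp hA N).eval x) (typeIIRec_eval hT hB y) hxy hy
    fun _ hl => eval_Qp_eq_zero_of_mem_Ico hp hT hTlow hB0 hB hA hx hl

lemma nuMat_inv_apply_eq_zero (hA : ∀ a : Fin p, ∀ j : ℕ, j < a → A a j = 0) {r b : Fin p}
    (h : r < b) : (nuMat p A)⁻¹ r b = 0 :=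
  inv_apply_eq_zero_of_lt (fun i j hij => by simp [nuMat, hA j i hij]) h

lemma X_pow_mul_mem_span_Qp (hp : 0 < p) (hA : ∀ a, TypeIRec p (fun n m => C (T n m)) X (A a))
    (hAzero : ∀ a : Fin p, ∀ j : ℕ, j < a → A a j = 0) (N m : ℕ) (r : Fin p) :
    X ^ m * ∑ b, (nuMat p A)⁻¹ r b • Qp p A b N
      ∈ Submodule.span ℝ ((fun l => Qp p A l N) '' Set.Iio (r + 1 + m * p)) := by
  refine (typeIRec_Qp hp hA N).X_pow_mul_mem_span (Submodule.sum_mem _ fun b _ => ?_) m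
  by_cases hbr : b ≤ r
  · exact Submodule.smul_mem _ _ (Submodule.subset_span ⟨b, by simp; omega, rfl⟩)
  · rw [nuMat_inv_apply_eq_zero hAzero (not_le.1 hbr), zero_smul]
    exact zero_mem _

lemma mu_mul_pow_eq (lam : Fin (N + 1) → ℝ) (i : Fin (N + 1)) (r : Fin p)
    (m : ℕ) : mu p A B N lam i r * lam i ^ m
      = (X ^ m * ∑ b, (nuMat p A)⁻¹ r b • Qp p A b N).eval (lam i)
        / ∑ l ∈ range (N + 1), (Qp p A l N).eval (lam i) * (B l).eval (lam i) := by
  simp only [mu, wfun, eval_mul, eval_pow, eval_X, eval_finsetSum, eval_smul, smul_eq_mul,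
    sum_mul, mul_sum, sum_div]
  exact sum_congr rfl fun b _ => by ring

end Qp

theorem stmt_8_general
    (p : ℕ)
    (T : ℕ → ℕ → ℝ)
    (hTsub : ∀ n m, m + p < n → T n m = 0)
    (hTlow : ∀ n, p ≤ n → T n (n - p) ≠ 0)
    (B : ℕ → Polynomial ℝ)
    (hB0 : B 0 = 1)
    (hBrec : ∀ n, B (n + 1) = (X - C (T n n)) * B n
      - ∑ j ∈ Finset.Icc 1 p, (if j ≤ n then C (T n (n - j)) * B (n - j) else 0))
    (A : Fin p → ℕ → Polynomial ℝ)
    (hAzero : ∀ a : Fin p, ∀ j : ℕ, j < (a : ℕ) → A a j = 0)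
    (hArec : ∀ a : Fin p, ∀ n : ℕ,
      (if n = 0 then 0 else A a (n - 1))
        + ∑ i ∈ Finset.range (p + 1), C (T (n + i) n) * A a (n + i) = X * A a n)
    (N : ℕ) (lam : Fin (N + 1) → ℝ)
    (hroots : ∀ k, eval (lam k) (B (N + 1)) = 0)
    (hanti : StrictAnti lam)
    (hden : ∀ k : Fin (N + 1), ∑ l ∈ Finset.range (N + 1),
      eval (lam k) (Qp p A l N) * eval (lam k) (B l) ≠ 0) :
    ∀ k j : ℕ, j < p → k * p + j ≤ N →
      (∀ m : ℕ, m ≤ k → ∀ r : Fin p, (r : ℕ) < j →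
        ∑ i : Fin (N + 1), mu p A B N lam i r * (lam i) ^ m * eval (lam i) (B (k * p + j)) = 0) ∧
      (∀ m : ℕ, m < k → ∀ r : Fin p, j ≤ (r : ℕ) →
        ∑ i : Fin (N + 1), mu p A B N lam i r * (lam i) ^ m * eval (lam i) (B (k * p + j)) = 0) := by
  intro k j hj hkj
  have hp : 0 < p := by omega
  set D : Fin (N + 1) → ℝ :=
    fun i => ∑ l ∈ range (N + 1), (Qp p A l N).eval (lam i) * (B l).eval (lam i)
  have hbiorth : ∀ n l : Fin (N + 1),
      ∑ i, (B n).eval (lam i) * (Qp p A l N).eval (lam i) / D i = if n = l then 1 else 0 :=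
    sum_mul_div_eq_ite_of_sum_mul_eq_ite (D := D) hden fun i i' => by
      rw [Fin.sum_univ_eq_sum_range (fun l => (Qp p A l N).eval (lam i) * (B l).eval (lam i'))]
      split_ifs with h
      · rw [h]
      · exact sum_eval_Qp_mul_eval_B_eq_zero hp hTsub hTlow hB0 hBrec hArec (hroots i)
          (hroots i') (hanti.injective.ne h)
  have key : ∀ m (r : Fin p), r + 1 + m * p ≤ k * p + j →
      ∑ i, mu p A B N lam i r * lam i ^ m * (B (k * p + j)).eval (lam i) = 0 := by
    intro m r hmr
    simp_rw [mu_mul_pow_eq, div_mul_eq_mul_div, mul_div_assoc]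
    refine sum_eval_mul_eq_zero_of_mem_span (fun l hl => ?_) (Submodule.span_mono
      (Set.image_mono (Set.Iio_subset_Iio hmr)) (X_pow_mul_mem_span_Qp hp hArec hAzero N m r))
    have h := hbiorth ⟨k * p + j, by omega⟩ ⟨l, by omega⟩
    rw [if_neg (by simp [Fin.ext_iff]; omega)] at h
    rw [← h]
    exact sum_congr rfl fun i _ => by ring
  exact ⟨fun m hm r hr => key m r (by nlinarith),
    fun m hm r hr => key m r (by nlinarith [r.isLt])⟩

theorem stmt_8
    (p : ℕ) (hp : 1 ≤ p)
    (T : ℕ → ℕ → ℝ)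
    (hT1 : ∀ n, T n (n + 1) = 1)
    (hTsup : ∀ n m, n + 1 < m → T n m = 0)
    (hTsub : ∀ n m, m + p < n → T n m = 0)
    (hTlow : ∀ n, p ≤ n → T n (n - p) ≠ 0)
    (B : ℕ → Polynomial ℝ)
    (hB0 : B 0 = 1)
    (hBrec : ∀ n, B (n + 1) = (X - C (T n n)) * B n
      - ∑ j ∈ Finset.Icc 1 p, (if j ≤ n then C (T n (n - j)) * B (n - j) else 0))
    (A : Fin p → ℕ → Polynomial ℝ)
    (hAconst : ∀ a : Fin p, ∀ j < p, ∃ c : ℝ, A a j = C c)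
    (hAzero : ∀ a : Fin p, ∀ j : ℕ, j < (a : ℕ) → A a j = 0)
    (hAone : ∀ a : Fin p, A a (a : ℕ) = 1)
    (hArec : ∀ a : Fin p, ∀ n : ℕ,
      (if n = 0 then 0 else A a (n - 1))
        + ∑ i ∈ Finset.range (p + 1), C (T (n + i) n) * A a (n + i) = X * A a n)
    (N : ℕ) (lam : Fin (N + 1) → ℝ)
    (hroots : ∀ k, eval (lam k) (B (N + 1)) = 0)
    (hanti : StrictAnti lam)
    (hsimple : ∀ k, eval (lam k) (derivative (B (N + 1))) ≠ 0)
    (hden : ∀ k : Fin (N + 1), ∑ l ∈ Finset.range (N + 1),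
      eval (lam k) (Qp p A l N) * eval (lam k) (B l) ≠ 0) :
    ∀ k j : ℕ, j < p → k * p + j ≤ N →
      (∀ m : ℕ, m ≤ k → ∀ r : Fin p, (r : ℕ) < j →
        ∑ i : Fin (N + 1), mu p A B N lam i r * (lam i) ^ m * eval (lam i) (B (k * p + j)) = 0) ∧
      (∀ m : ℕ, m < k → ∀ r : Fin p, j ≤ (r : ℕ) →
        ∑ i : Fin (N + 1), mu p A B N lam i r * (lam i) ^ m * eval (lam i) (B (k * p + j)) = 0) :=
  stmt_8_general p T hTsub hTlow B hB0 hBrec A hAzero hArec N lam hroots hanti hden
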